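/- arXiv:2001.11918 — 3 statements merged into one kernel-verified Lean document; each statement's English description precedes it below -/
import Mathlib

section
/- Let N ≥ 3 and let L be the N×N Laplacian of the complete (all-to-all connected) graph on N nodes with all rates equal to 1: L_{i j} = 1 for i ≠ j and L_{i i} = −(N−1). Fix two distinct nodes a ≠ b, let S be the N×(N−2) matrix obtained from L by deleting columns a and b, and let Ŝ be S with every column normalized to unit Euclidean length. Then ‖I_{N−2} − Ŝᵀ Ŝ‖_F = √((N−2)(N−3)) / (N−1), so the orthogonality of this scheme is Θ = 1 − √((N−2)(N−3))/(N−1). -/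
open Matrix BigOperators

/-!
The complete-graph Laplacian is `L = J - N • 1` with `J` the all-ones matrix, so
`Lᵀ * L = N² • 1 - N • J`: every column has squared norm `N (N - 1)` and two distinct columns
have inner product `-N`. After normalization every off-diagonal entry of `Ŝᵀ Ŝ` is
`-1 / (N - 1)`, so `1 - Ŝᵀ Ŝ` has `(N - 2)(N - 3)` nonzero entries, all equal to `1 / (N - 1)`.
-/

noncomputable def frobeniusNorm {n : Type*} {m : Type*} [Fintype n] [Fintype m]
    (M : Matrix n m ℝ) : ℝ :=
  Real.sqrt (∑ i, ∑ j, (M i j) ^ 2)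

theorem transpose_mul_self_apply_of_normalized {ι κ : Type*} [Fintype ι] {S Shat : Matrix ι κ ℝ}
    (hShat : ∀ r c, Shat r c = S r c / Real.sqrt (∑ r', (S r' c) ^ 2)) (c d : κ) :
    (Shatᵀ * Shat) c d
      = (Sᵀ * S) c d / (Real.sqrt ((Sᵀ * S) c c) * Real.sqrt ((Sᵀ * S) d d)) := by
  simp only [mul_apply, transpose_apply, hShat, div_mul_div_comm, Finset.sum_div, pow_two]

theorem sum_sq_offDiag_const {κ : Type*} [Fintype κ] [DecidableEq κ] (x : ℝ) :
    ∑ c : κ, ∑ d : κ, (if c = d then 0 else x) ^ 2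
      = (Fintype.card κ : ℝ) * ((Fintype.card κ : ℝ) - 1) * x ^ 2 := by
  have hsq : ∀ c d : κ, (if c = d then 0 else x) ^ 2 = x ^ 2 - if c = d then x ^ 2 else 0 := by
    intro c d; split_ifs <;> ring
  simp only [hsq, Finset.sum_sub_distrib, Finset.sum_ite_eq, Finset.mem_univ, if_true,
    Finset.sum_const, Finset.card_univ, nsmul_eq_mul]
  ring

theorem frobeniusNorm_offDiag_const {κ : Type*} [Fintype κ] [DecidableEq κ] (x : ℝ) :
    frobeniusNorm (of fun c d : κ => if c = d then 0 else x)
      = Real.sqrt ((Fintype.card κ : ℝ) * ((Fintype.card κ : ℝ) - 1)) * |x| := by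
  rw [frobeniusNorm]
  simp only [of_apply]
  rw [sum_sq_offDiag_const, Real.sqrt_mul' _ (sq_nonneg x), Real.sqrt_sq_eq_abs]

section CompleteGraph

variable {ι κ : Type*} [Fintype ι] [DecidableEq ι] [DecidableEq κ]

theorem completeLaplacian_transpose_mul_self_apply {L : Matrix ι ι ℝ}
    (hL : ∀ i j, L i j = if i = j then -((Fintype.card ι : ℝ) - 1) else 1) (i j : ι) :
    (Lᵀ * L) i j = if i = j then (Fintype.card ι : ℝ) * (Fintype.card ι - 1)
      else -(Fintype.card ι : ℝ) := by
  set n : ℝ := (Fintype.card ι : ℝ) with hn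
  have hL' : ∀ r k, L r k = 1 - n * (if r = k then 1 else 0) := by
    intro r k; rw [hL]; split_ifs <;> ring
  rcases eq_or_ne i j with rfl | hij
  · simp [mul_apply, hL', sub_mul, mul_sub, Finset.sum_sub_distrib, ← hn]
  · simp [mul_apply, hL', sub_mul, mul_sub, Finset.sum_sub_distrib, ← hn, hij, hij.symm]

theorem transpose_mul_self_apply_of_normalized_completeLaplacian_cols {L : Matrix ι ι ℝ}
    (hL : ∀ i j, L i j = if i = j then -((Fintype.card ι : ℝ) - 1) else 1)
    (hι : 2 ≤ Fintype.card ι) {g : κ → ι} (hg : Function.Injective g) {Shat : Matrix ι κ ℝ}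
    (hShat : ∀ r c, Shat r c
      = L.submatrix id g r c / Real.sqrt (∑ r', (L.submatrix id g r' c) ^ 2)) (c d : κ) :
    (Shatᵀ * Shat) c d = if c = d then 1 else -1 / ((Fintype.card ι : ℝ) - 1) := by
  have hgram : (L.submatrix id g)ᵀ * L.submatrix id g = (Lᵀ * L).submatrix g g := by
    rw [transpose_submatrix, submatrix_mul _ _ _ id _ Function.bijective_id]
  have hn : (1 : ℝ) < Fintype.card ι := by exact_mod_cast hι
  rw [transpose_mul_self_apply_of_normalized hShat, hgram]
  simp only [submatrix_apply, completeLaplacian_transpose_mul_self_apply hL, if_true, hg.eq_iff]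
  rw [Real.mul_self_sqrt (by nlinarith)]
  split_ifs
  · exact div_self (by nlinarith)
  · field_simp

end CompleteGraph

theorem complete_graph_orthogonality_general
    (N : ℕ) (hN : 3 ≤ N) (L : Matrix (Fin N) (Fin N) ℝ)
    (hL : ∀ i j : Fin N, L i j = if i = j then -((N : ℝ) - 1) else 1)
    (g : Fin (N - 2) → Fin N) (hg : Function.Injective g)
    (S : Matrix (Fin N) (Fin (N - 2)) ℝ) (hS : S = L.submatrix id g)
    (Shat : Matrix (Fin N) (Fin (N - 2)) ℝ)
    (hShat : ∀ r c, Shat r c = S r c / Real.sqrt (∑ r', (S r' c) ^ 2)) :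
    frobeniusNorm ((1 : Matrix (Fin (N - 2)) (Fin (N - 2)) ℝ) - Shatᵀ * Shat)
      = Real.sqrt (((N : ℝ) - 2) * ((N : ℝ) - 3)) / ((N : ℝ) - 1) := by
  subst hS
  have hL' : ∀ i j, L i j = if i = j then -((Fintype.card (Fin N) : ℝ) - 1) else 1 := by
    simpa using hL
  have hN1 : (0 : ℝ) < N - 1 := by
    have : (3 : ℝ) ≤ N := by exact_mod_cast hN
    linarith
  have hdiff : 1 - Shatᵀ * Shat = of fun c d => if c = d then 0 else 1 / ((N : ℝ) - 1) := by
    ext c d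
    rw [Matrix.sub_apply, one_apply,
      transpose_mul_self_apply_of_normalized_completeLaplacian_cols hL'
        (by rw [Fintype.card_fin]; omega) hg hShat, Fintype.card_fin, of_apply]
    split_ifs <;> ring
  rw [hdiff, frobeniusNorm_offDiag_const, Fintype.card_fin, Nat.cast_sub (by omega),
    abs_of_pos (one_div_pos.mpr hN1)]
  push_cast
  rw [show (N : ℝ) - 2 - 1 = N - 3 by ring, mul_one_div]

/-- For the Laplacian `L` of the complete graph on `N ≥ 3` nodes with all rates 1
(`L i j = 1` for `i ≠ j`, `L i i = -(N-1)`), two distinct discriminatory nodes `a ≠ b`,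
`S` the matrix obtained from `L` by deleting columns `a` and `b` (realized via an
injection `g : Fin (N-2) → Fin N` onto the complement of `{a, b}`), and `Ŝ` the
column-normalized `S`, one has `‖I - Ŝᵀ Ŝ‖_F = √((N-2)(N-3)) / (N-1)`, hence the
orthogonality of the scheme is `Θ = 1 - √((N-2)(N-3)) / (N-1)`. -/
theorem complete_graph_orthogonality
    (N : ℕ) (hN : 3 ≤ N) (L : Matrix (Fin N) (Fin N) ℝ)
    (hL : ∀ i j : Fin N, L i j = if i = j then -((N : ℝ) - 1) else 1)
    (a b : Fin N) (hab : a ≠ b)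
    (g : Fin (N - 2) → Fin N) (hg : Function.Injective g)
    (hrange : Set.range g = ({a, b} : Set (Fin N))ᶜ)
    (S : Matrix (Fin N) (Fin (N - 2)) ℝ) (hS : S = L.submatrix id g)
    (Shat : Matrix (Fin N) (Fin (N - 2)) ℝ)
    (hShat : ∀ r c, Shat r c = S r c / Real.sqrt (∑ r', (S r' c) ^ 2)) :
    frobeniusNorm ((1 : Matrix (Fin (N - 2)) (Fin (N - 2)) ℝ) - Shatᵀ * Shat)
      = Real.sqrt (((N : ℝ) - 2) * ((N : ℝ) - 3)) / ((N : ℝ) - 1) :=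
  complete_graph_orthogonality_general N hN L hL g hg S hS Shat hShat
end

section
/- Let N ≥ 4. Let L_line be the N×N Laplacian of the path graph on nodes 0, …, N−1 with all rates 1 (L_{i j} = 1 if |i−j| = 1, diagonal entries making columns sum to zero), and let S_line be L_line with the end columns 0 and N−1 deleted. Let L_all be the N×N Laplacian of the complete graph with all rates 1 (L_{i j} = 1 for i ≠ j, L_{i i} = −(N−1)), and let S_all be L_all with two distinct columns a, b deleted. Then ‖I − Ŝ_lineᵀ Ŝ_line‖_F > ‖I − Ŝ_allᵀ Ŝ_all‖_F; equivalently, the orthogonality of the all-to-all scheme is strictly greater than that of the line scheme. -/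
/-!
Each column of the complete-graph Laplacian is the all-ones vector with one entry replaced by
`-(N - 1)`, so every column has squared norm `N (N - 1)` and any two columns have inner product
`-N`; hence `I - ŜᵀŜ` has zero diagonal and all off-diagonal entries `1 / (N - 1)`, and its
squared Frobenius norm is `(N - 2)(N - 3) / (N - 1)²`. Each retained column of the path Laplacian
is the stencil `(1, -2, 1)`, of squared norm `6`, and neighbouring columns have inner product
`-4`, so the `N - 3` superdiagonal entries of `I - ŜᵀŜ` alone contribute `(N - 3)(2/3)²`.
The claim reduces to `9 (N - 2) < 4 (N - 1)²`.
-/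

open Matrix BigOperators

theorem transpose_mul_self_eq_smul_of_colNormSq_eq {m n : Type*} [Fintype m]
    (S Ŝ : Matrix m n ℝ) (hŜ : ∀ r c, Ŝ r c = S r c / √(∑ r', S r' c ^ 2))
    {κ : ℝ} (hκ : ∀ c, ∑ r, S r c ^ 2 = κ) : Ŝᵀ * Ŝ = κ⁻¹ • (Sᵀ * S) := by
  ext c d
  have hκ0 : 0 ≤ κ := hκ c ▸ Finset.sum_nonneg fun r _ => sq_nonneg (S r c)
  simp only [mul_apply, transpose_apply, Matrix.smul_apply, smul_eq_mul, Finset.mul_sum, hŜ, hκ]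
  refine Finset.sum_congr rfl fun r _ => ?_
  rw [div_mul_div_comm, Real.mul_self_sqrt hκ0, div_eq_inv_mul]

theorem sum_sq_ite_eq_zero {n : Type*} [Fintype n] [DecidableEq n] (y : ℝ) :
    ∑ c : n, ∑ d : n, (if c = d then 0 else y) ^ 2 =
      Fintype.card n * (Fintype.card n - 1) * y ^ 2 := by
  have hrow (c : n) : ∑ d, (if c = d then 0 else y) ^ 2 = (Fintype.card n - 1) * y ^ 2 := by
    rw [← Finset.add_sum_erase _ _ (Finset.mem_univ c), Finset.sum_congr rfl fun d hd =>
      by rw [if_neg (Finset.ne_of_mem_erase hd).symm], Finset.sum_const, Finset.card_erase_of_mem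
      (Finset.mem_univ c), Finset.card_univ, if_pos rfl, nsmul_eq_mul,
      Nat.cast_sub (Fintype.card_pos_iff.mpr ⟨c⟩)]
    simp
  simp only [hrow, Finset.sum_const, Finset.card_univ, nsmul_eq_mul]
  ring

theorem sub_one_mul_sq_le_sum_sq_of_superdiagonal_eq {n : ℕ} (M : Matrix (Fin n) (Fin n) ℝ)
    (y : ℝ) (hM : ∀ c d : Fin n, d.val = c.val + 1 → M c d = y) :
    ((n : ℝ) - 1) * y ^ 2 ≤ ∑ c, ∑ d, M c d ^ 2 := by
  cases n with
  | zero => simpa using sq_nonneg y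
  | succ k =>
    rw [Fin.sum_univ_castSucc]
    have hrow : ∀ c : Fin k, y ^ 2 ≤ ∑ d, M c.castSucc d ^ 2 := fun c =>
      hM c.castSucc c.succ rfl ▸
        Finset.single_le_sum (fun d _ => sq_nonneg (M c.castSucc d)) (Finset.mem_univ c.succ)
    calc ((↑(k + 1) : ℝ) - 1) * y ^ 2 = ∑ c : Fin k, y ^ 2 + 0 := by simp
      _ ≤ _ := add_le_add (Finset.sum_le_sum fun c _ => hrow c)
          (Finset.sum_nonneg fun d _ => sq_nonneg _)

theorem sum_ite_eq_mul_ite_eq {ι : Type*} [Fintype ι] [DecidableEq ι] (x : ℝ) (p q : ι) :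
    ∑ i, (if i = p then x else 1) * (if i = q then x else 1) =
      Fintype.card ι + 2 * (x - 1) + if p = q then (x - 1) ^ 2 else 0 := by
  have h : ∀ p i : ι, (if i = p then x else 1) = 1 + (x - 1) * if i = p then 1 else 0 := by
    intro p i; split_ifs <;> ring
  simp only [h, add_mul, mul_add, one_mul, mul_one, Finset.sum_add_distrib, mul_ite, mul_zero,
    Finset.sum_ite_eq', Finset.mem_univ, if_true, Finset.sum_const, Finset.card_univ, nsmul_eq_mul]
  rcases eq_or_ne p q with rfl | hpq
  · rw [if_pos rfl, if_pos rfl]; ring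
  · rw [if_neg hpq.symm, if_neg hpq]; ring

theorem one_sub_normalized_gram_of_ite_eq {m n : Type*} [Fintype m] [DecidableEq m]
    [DecidableEq n] {g : n → m} (hg : Function.Injective g) {x : ℝ} (S Ŝ : Matrix m n ℝ)
    (hS : ∀ i c, S i c = if i = g c then x else 1)
    (hŜ : ∀ r c, Ŝ r c = S r c / √(∑ r', S r' c ^ 2))
    (hκ : (Fintype.card m : ℝ) + 2 * (x - 1) + (x - 1) ^ 2 ≠ 0) (c d : n) :
    ((1 : Matrix n n ℝ) - Ŝᵀ * Ŝ) c d = if c = d then 0 else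
      -(Fintype.card m + 2 * (x - 1)) / (Fintype.card m + 2 * (x - 1) + (x - 1) ^ 2) := by
  have hgram (c d : n) : (Sᵀ * S) c d =
      Fintype.card m + 2 * (x - 1) + if c = d then (x - 1) ^ 2 else 0 := by
    simp only [mul_apply, transpose_apply, hS, sum_ite_eq_mul_ite_eq, hg.eq_iff]
  have hnorm (c : n) : ∑ r, S r c ^ 2 = Fintype.card m + 2 * (x - 1) + (x - 1) ^ 2 := by
    simpa [mul_apply, sq] using hgram c c
  rw [Matrix.sub_apply, transpose_mul_self_eq_smul_of_colNormSq_eq S Ŝ hŜ hnorm,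
    Matrix.smul_apply, hgram, one_apply, smul_eq_mul]
  split_ifs
  · rw [inv_mul_cancel₀ hκ, sub_self]
  · rw [add_zero, zero_sub, neg_div, div_eq_inv_mul]

theorem one_sub_normalized_gram_completeLaplacian {N : ℕ} (hN : 2 ≤ N) {n : Type*}
    [DecidableEq n] {L : Matrix (Fin N) (Fin N) ℝ}
    (hL : ∀ i j : Fin N, L i j = if i = j then -((N : ℝ) - 1) else 1)
    {g : n → Fin N} (hg : Function.Injective g) (Ŝ : Matrix (Fin N) n ℝ)
    (hŜ : ∀ r c, Ŝ r c = L.submatrix id g r c / √(∑ r', L.submatrix id g r' c ^ 2))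
    (c d : n) :
    ((1 : Matrix n n ℝ) - Ŝᵀ * Ŝ) c d = if c = d then 0 else ((N : ℝ) - 1)⁻¹ := by
  have hN1 : (1 : ℝ) < N := by exact_mod_cast hN
  have hden :
      (N : ℝ) + 2 * (-((N : ℝ) - 1) - 1) + (-((N : ℝ) - 1) - 1) ^ 2 = N * (N - 1) := by
    ring
  have hnum : -((N : ℝ) + 2 * (-((N : ℝ) - 1) - 1)) = N := by ring
  rw [one_sub_normalized_gram_of_ite_eq hg _ Ŝ (fun i c => hL i (g c)) hŜ
    (by rw [Fintype.card_fin, hden]; positivity) c d,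
    Fintype.card_fin, hden, hnum, div_mul_cancel_left₀ (by positivity)]

def secondDifference (c i : ℕ) : ℝ :=
  if i = c ∨ i = c + 2 then 1 else if i = c + 1 then -2 else 0

theorem sum_fin_eq_sum_of_support_subset {N : ℕ} (f : ℕ → ℝ) (s : Finset ℕ)
    (hs : ∀ i ∈ s, i < N) (hf : ∀ i, i ∉ s → f i = 0) :
    ∑ i : Fin N, f i = ∑ i ∈ s, f i := by
  rw [Fin.sum_univ_eq_sum_range f,
    Finset.sum_subset (fun i hi => Finset.mem_range.mpr (hs i hi))]
  exact fun i _ hi => hf i hi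

theorem sum_secondDifference_sq {N c : ℕ} (hc : c + 2 < N) :
    ∑ i : Fin N, secondDifference c i ^ 2 = 6 := by
  rw [sum_fin_eq_sum_of_support_subset (fun i => secondDifference c i ^ 2) {c, c + 1, c + 2}]
  · norm_num [secondDifference]
  · simp only [Finset.mem_insert, Finset.mem_singleton, forall_eq_or_imp, forall_eq]; omega
  · intro i hi
    simp only [Finset.mem_insert, Finset.mem_singleton, not_or] at hi
    simp only [secondDifference]
    split_ifs <;> first | omega | ring

theorem sum_secondDifference_mul_succ {N c : ℕ} (hc : c + 3 < N) :
    ∑ i : Fin N, secondDifference c i * secondDifference (c + 1) i = -4 := by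
  rw [sum_fin_eq_sum_of_support_subset
    (fun i => secondDifference c i * secondDifference (c + 1) i) {c + 1, c + 2}]
  · norm_num [secondDifference]
  · simp only [Finset.mem_insert, Finset.mem_singleton, forall_eq_or_imp, forall_eq]; omega
  · intro i hi
    simp only [Finset.mem_insert, Finset.mem_singleton, not_or] at hi
    simp only [secondDifference]
    split_ifs <;> first | omega | ring

theorem pathLaplacian_apply_eq_secondDifference {N : ℕ} {L : Matrix (Fin N) (Fin N) ℝ}
    (hL : ∀ i j : Fin N, L i j =
      if (i.val : ℤ) - (j.val : ℤ) = 1 ∨ (j.val : ℤ) - (i.val : ℤ) = 1 then 1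
      else if i = j then -(if i.val = 0 ∨ i.val = N - 1 then (1 : ℝ) else 2)
      else 0)
    {c : ℕ} (hc : c + 2 < N) (i j : Fin N) (hj : j.val = c + 1) :
    L i j = secondDifference c i := by
  simp only [hL, secondDifference, Fin.ext_iff, hj]
  split_ifs <;> first | omega | norm_num

theorem one_sub_normalized_gram_pathLaplacian_of_succ {N n : ℕ} (hn : n + 2 ≤ N)
    {L : Matrix (Fin N) (Fin N) ℝ}
    (hL : ∀ i j : Fin N, L i j =
      if (i.val : ℤ) - (j.val : ℤ) = 1 ∨ (j.val : ℤ) - (i.val : ℤ) = 1 then 1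
      else if i = j then -(if i.val = 0 ∨ i.val = N - 1 then (1 : ℝ) else 2)
      else 0)
    {h : Fin n → Fin N} (hh : ∀ c, (h c).val = c.val + 1) (Ŝ : Matrix (Fin N) (Fin n) ℝ)
    (hŜ : ∀ r c, Ŝ r c = L.submatrix id h r c / √(∑ r', L.submatrix id h r' c ^ 2))
    (c d : Fin n) (hcd : d.val = c.val + 1) :
    ((1 : Matrix (Fin n) (Fin n) ℝ) - Ŝᵀ * Ŝ) c d = 2 / 3 := by
  have hcol (i : Fin N) (c : Fin n) : L.submatrix id h i c = secondDifference c i :=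
    pathLaplacian_apply_eq_secondDifference hL (by omega) i (h c) (hh c)
  rw [Matrix.sub_apply, one_apply_ne (fun e => by subst e; omega),
    transpose_mul_self_eq_smul_of_colNormSq_eq _ Ŝ hŜ
      (fun c => by simp only [hcol]; exact sum_secondDifference_sq (by omega)),
    Matrix.smul_apply, mul_apply]
  simp only [transpose_apply, hcol, hcd]
  rw [sum_secondDifference_mul_succ (by omega)]
  norm_num

theorem line_less_orthogonal_than_complete_general
    (N : ℕ) (hN : 4 ≤ N)
    (Lline Lall : Matrix (Fin N) (Fin N) ℝ)
    (hLline : ∀ i j : Fin N, Lline i j =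
      if (i.val : ℤ) - (j.val : ℤ) = 1 ∨ (j.val : ℤ) - (i.val : ℤ) = 1 then 1
      else if i = j then -(if i.val = 0 ∨ i.val = N - 1 then (1 : ℝ) else 2)
      else 0)
    (hLall : ∀ i j : Fin N, Lall i j = if i = j then -((N : ℝ) - 1) else 1)
    (g : Fin (N - 2) → Fin N) (hg : Function.Injective g)
    (h : Fin (N - 2) → Fin N) (hh : ∀ c, (h c).val = c.val + 1)
    (Sline Sall : Matrix (Fin N) (Fin (N - 2)) ℝ)
    (hSline : Sline = Lline.submatrix id h)
    (hSall : Sall = Lall.submatrix id g)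
    (Slinehat Sallhat : Matrix (Fin N) (Fin (N - 2)) ℝ)
    (hSlinehat : ∀ r c, Slinehat r c = Sline r c / Real.sqrt (∑ r', (Sline r' c) ^ 2))
    (hSallhat : ∀ r c, Sallhat r c = Sall r c / Real.sqrt (∑ r', (Sall r' c) ^ 2)) :
    frobeniusNorm ((1 : Matrix (Fin (N - 2)) (Fin (N - 2)) ℝ) - Slinehatᵀ * Slinehat)
      > frobeniusNorm ((1 : Matrix (Fin (N - 2)) (Fin (N - 2)) ℝ) - Sallhatᵀ * Sallhat) := by
  subst hSline hSall
  have hNr : (4 : ℝ) ≤ N := by exact_mod_cast hN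
  have hcard : ((N - 2 : ℕ) : ℝ) = N - 2 := by rw [Nat.cast_sub (by omega)]; norm_num
  rw [gt_iff_lt, frobeniusNorm, frobeniusNorm]
  refine Real.sqrt_lt_sqrt (by positivity) ?_
  calc _ = ((N : ℝ) - 2) * ((N - 2) - 1) * ((N - 1 : ℝ)⁻¹) ^ 2 := by
        simp only [one_sub_normalized_gram_completeLaplacian (by omega) hLall hg _ hSallhat,
          sum_sq_ite_eq_zero, Fintype.card_fin, hcard]
    _ < ((N : ℝ) - 2 - 1) * (2 / 3) ^ 2 := by
        rw [inv_pow, ← div_eq_mul_inv, div_lt_iff₀ (by nlinarith)]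
        nlinarith [mul_pos (show (0 : ℝ) < N - 3 by linarith)
          (show (0 : ℝ) < 4 * (N - 1) ^ 2 - 9 * (N - 2) by nlinarith)]
    _ ≤ _ := hcard ▸ sub_one_mul_sq_le_sum_sq_of_superdiagonal_eq _ _
        (one_sub_normalized_gram_pathLaplacian_of_succ (by omega) hLline hh _ hSlinehat)

/-- For `N ≥ 4`: let `Lline` be the Laplacian of the path graph on nodes `0, …, N-1` with
all rates 1 and `Sline` its submatrix with end columns `0` and `N-1` deleted (via the map
`h c = c + 1`); let `Lall` be the Laplacian of the complete graph with all rates 1 and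
`Sall` its submatrix with two distinct columns `a, b` deleted (via an injection `g` onto
the complement of `{a, b}`).  With `Ŝ` denoting column normalization,
`‖I - Ŝlineᵀ Ŝline‖_F > ‖I - Ŝallᵀ Ŝall‖_F`: the all-to-all scheme has strictly greater
orthogonality than the line scheme. -/
theorem line_less_orthogonal_than_complete
    (N : ℕ) (hN : 4 ≤ N)
    (Lline Lall : Matrix (Fin N) (Fin N) ℝ)
    (hLline : ∀ i j : Fin N, Lline i j =
      if (i.val : ℤ) - (j.val : ℤ) = 1 ∨ (j.val : ℤ) - (i.val : ℤ) = 1 then 1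
      else if i = j then -(if i.val = 0 ∨ i.val = N - 1 then (1 : ℝ) else 2)
      else 0)
    (hLall : ∀ i j : Fin N, Lall i j = if i = j then -((N : ℝ) - 1) else 1)
    (a b : Fin N) (hab : a ≠ b)
    (g : Fin (N - 2) → Fin N) (hg : Function.Injective g)
    (hrange : Set.range g = ({a, b} : Set (Fin N))ᶜ)
    (h : Fin (N - 2) → Fin N) (hh : ∀ c, (h c).val = c.val + 1)
    (Sline Sall : Matrix (Fin N) (Fin (N - 2)) ℝ)
    (hSline : Sline = Lline.submatrix id h)
    (hSall : Sall = Lall.submatrix id g)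
    (Slinehat Sallhat : Matrix (Fin N) (Fin (N - 2)) ℝ)
    (hSlinehat : ∀ r c, Slinehat r c = Sline r c / Real.sqrt (∑ r', (Sline r' c) ^ 2))
    (hSallhat : ∀ r c, Sallhat r c = Sall r c / Real.sqrt (∑ r', (Sall r' c) ^ 2)) :
    frobeniusNorm ((1 : Matrix (Fin (N - 2)) (Fin (N - 2)) ℝ) - Slinehatᵀ * Slinehat)
      > frobeniusNorm ((1 : Matrix (Fin (N - 2)) (Fin (N - 2)) ℝ) - Sallhatᵀ * Sallhat) :=
  line_less_orthogonal_than_complete_general N hN Lline Lall hLline hLall g hg h hh Sline Sall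
    hSline hSall Slinehat Sallhat hSlinehat hSallhat
end

section
/- Fix r > 0 and let L be the 4×4 Laplacian of the fully connected graph on nodes 1,2,3,4 in which the edges 1–2, 2–3, 3–4 carry bidirectional rate r and the edges 1–3, 1–4, 2–4 carry bidirectional rate 1 (diagonal entries set so that every column sums to zero). Let S be L with columns 1 and 4 deleted and Ŝ the column-normalized S. Then ‖I₂ − Ŝᵀ Ŝ‖_F = 2√2 · r² / (3r² + 2r + 1), so the orthogonality Θ(r) = 1 − 2√2 r²/(3r²+2r+1) is a strictly decreasing function of r on (0, ∞). -/
open Matrix BigOperators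

/-!
The Gram matrix `G = SᵀS` of `S` determines that of its column normalization:
`(ŜᵀŜ) i j = G i j / (√(G i i) √(G j j))`, a matrix of cosines with unit diagonal. With two
columns, `I - ŜᵀŜ` therefore has a single off-diagonal cosine `G 0 1 / (√(G 0 0) √(G 1 1))` in
both corners, and its Frobenius norm is `√2` times its absolute value. For the four-node
Laplacian both middle columns have squared length `2 (3r² + 2r + 1)` and inner product `-4r²`.
Monotonicity of `Θ` reduces to that of `t² / (3t² + 2t + 1) = 1 / (3 + 2/t + 1/t²)`.
-/

section ColumnNormalization

variable {m n : Type*} [Fintype m]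

noncomputable def colNormalize (S : Matrix m n ℝ) : Matrix m n ℝ :=
  fun i c => S i c / Real.sqrt (∑ k, S k c ^ 2)

theorem sum_sq_col_eq_transpose_mul_self (S : Matrix m n ℝ) (c : n) :
    ∑ k, S k c ^ 2 = (Sᵀ * S) c c := by
  simp only [mul_apply, transpose_apply, sq]

theorem colNormalize_gram_apply (S : Matrix m n ℝ) (i j : n) :
    ((colNormalize S)ᵀ * colNormalize S) i j
      = (Sᵀ * S) i j / (Real.sqrt ((Sᵀ * S) i i) * Real.sqrt ((Sᵀ * S) j j)) := by
  simp only [mul_apply, transpose_apply, colNormalize, sum_sq_col_eq_transpose_mul_self,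
    div_mul_div_comm, Finset.sum_div]

theorem colNormalize_gram_apply_self (S : Matrix m n ℝ) {i : n} (hi : (Sᵀ * S) i i ≠ 0) :
    ((colNormalize S)ᵀ * colNormalize S) i i = 1 := by
  have hpos : 0 < (Sᵀ * S) i i :=
    lt_of_le_of_ne (sum_sq_col_eq_transpose_mul_self S i ▸ by positivity) hi.symm
  rw [colNormalize_gram_apply, Real.mul_self_sqrt hpos.le, div_self hi]

end ColumnNormalization

theorem frobeniusNorm_fin_two (M : Matrix (Fin 2) (Fin 2) ℝ) :
    frobeniusNorm M = Real.sqrt (M 0 0 ^ 2 + M 0 1 ^ 2 + M 1 0 ^ 2 + M 1 1 ^ 2) := by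
  simp only [frobeniusNorm, Fin.sum_univ_two, add_assoc]

theorem frobeniusNorm_one_sub_colNormalize_gram {m : Type*} [Fintype m]
    (S : Matrix m (Fin 2) ℝ) (h₀ : (Sᵀ * S) 0 0 ≠ 0) (h₁ : (Sᵀ * S) 1 1 ≠ 0) :
    frobeniusNorm (1 - (colNormalize S)ᵀ * colNormalize S)
      = Real.sqrt 2 * |(Sᵀ * S) 0 1|
          / (Real.sqrt ((Sᵀ * S) 0 0) * Real.sqrt ((Sᵀ * S) 1 1)) := by
  have hsymm : (Sᵀ * S) 1 0 = (Sᵀ * S) 0 1 := by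
    simp only [mul_apply, transpose_apply, mul_comm]
  rw [frobeniusNorm_fin_two]
  simp only [Matrix.sub_apply, one_apply_eq, one_apply_ne zero_ne_one, one_apply_ne one_ne_zero,
    colNormalize_gram_apply_self S h₀, colNormalize_gram_apply_self S h₁]
  rw [colNormalize_gram_apply, colNormalize_gram_apply, hsymm]
  have hnorms : 0 ≤ Real.sqrt ((Sᵀ * S) 0 0) * Real.sqrt ((Sᵀ * S) 1 1) := by positivity
  conv_rhs => rw [mul_div_assoc, ← abs_of_nonneg hnorms, ← abs_div, ← Real.sqrt_sq_eq_abs,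
    ← Real.sqrt_mul zero_le_two]
  congr 1
  ring

theorem strictMonoOn_sq_div_quadratic {a b c : ℝ} (ha : 0 ≤ a) (hb : 0 ≤ b) (hc : 0 < c) :
    StrictMonoOn (fun t : ℝ => t ^ 2 / (a * t ^ 2 + b * t + c)) (Set.Ioi 0) := by
  intro x hx y hy hxy
  simp only [Set.mem_Ioi] at hx hy
  rw [div_lt_div_iff₀ (by positivity) (by positivity)]
  have key : 0 < b * x * y * (y - x) + c * (y - x) * (y + x) := by
    have := sub_pos.2 hxy
    positivity
  nlinarith [key]

theorem four_node_orthogonality_general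
    (r : ℝ)
    (L : Matrix (Fin 4) (Fin 4) ℝ)
    (hL : L = !![-(r + 2), r, 1, 1;
                 r, -(2 * r + 1), r, 1;
                 1, r, -(2 * r + 1), r;
                 1, 1, r, -(r + 2)])
    (S : Matrix (Fin 4) (Fin 2) ℝ) (hS : S = L.submatrix id ![1, 2])
    (Shat : Matrix (Fin 4) (Fin 2) ℝ)
    (hShat : ∀ ro c, Shat ro c = S ro c / Real.sqrt (∑ r', (S r' c) ^ 2)) :
    frobeniusNorm ((1 : Matrix (Fin 2) (Fin 2) ℝ) - Shatᵀ * Shat)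
        = 2 * Real.sqrt 2 * r ^ 2 / (3 * r ^ 2 + 2 * r + 1)
      ∧ StrictAntiOn
          (fun t : ℝ => 1 - 2 * Real.sqrt 2 * t ^ 2 / (3 * t ^ 2 + 2 * t + 1))
          (Set.Ioi 0) := by
  have hD : 0 < 3 * r ^ 2 + 2 * r + 1 := by nlinarith [sq_nonneg (r + 1 / 3)]
  have hShat : Shat = colNormalize S := funext₂ hShat
  have hG : Sᵀ * S = !![2 * (3 * r ^ 2 + 2 * r + 1), -(4 * r ^ 2);
                        -(4 * r ^ 2), 2 * (3 * r ^ 2 + 2 * r + 1)] := by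
    subst hL hS
    ext i j
    simp only [Matrix.mul_apply, Fin.sum_univ_four]
    fin_cases i <;> fin_cases j <;> simp <;> ring
  constructor
  · rw [hShat, frobeniusNorm_one_sub_colNormalize_gram S (by simp [hG]; positivity)
      (by simp [hG]; positivity)]
    simp only [hG, of_apply, cons_val', cons_val_zero, cons_val_one, empty_val', cons_val_fin_one,
      abs_neg, Real.mul_self_sqrt (by positivity : (0 : ℝ) ≤ 2 * (3 * r ^ 2 + 2 * r + 1))]
    rw [abs_of_nonneg (by positivity)]
    field_simp
    ring
  · intro x hx y hy hxy
    have hmono := strictMonoOn_sq_div_quadratic (by norm_num : (0 : ℝ) ≤ 3) zero_le_two one_pos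
      hx hy hxy
    simp only [mul_div_assoc] at hmono ⊢
    nlinarith [Real.sqrt_pos.2 (zero_lt_two' ℝ)]

/-- For the 4×4 Laplacian of the fully connected toy network in which the path edges
1–2, 2–3, 3–4 carry bidirectional rate `r > 0` and the edges 1–3, 1–4, 2–4 carry rate 1
(diagonal entries making all columns sum to zero), with `S` the matrix of the two middle
columns and `Ŝ` its column normalization:
`‖I₂ - Ŝᵀ Ŝ‖_F = 2 √2 r² / (3r² + 2r + 1)`, and the orthogonality
`Θ(r) = 1 - 2 √2 r² / (3r² + 2r + 1)` is strictly decreasing on `(0, ∞)`. -/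
theorem four_node_orthogonality
    (r : ℝ) (hr : 0 < r)
    (L : Matrix (Fin 4) (Fin 4) ℝ)
    (hL : L = !![-(r + 2), r, 1, 1;
                 r, -(2 * r + 1), r, 1;
                 1, r, -(2 * r + 1), r;
                 1, 1, r, -(r + 2)])
    (S : Matrix (Fin 4) (Fin 2) ℝ) (hS : S = L.submatrix id ![1, 2])
    (Shat : Matrix (Fin 4) (Fin 2) ℝ)
    (hShat : ∀ ro c, Shat ro c = S ro c / Real.sqrt (∑ r', (S r' c) ^ 2)) :
    frobeniusNorm ((1 : Matrix (Fin 2) (Fin 2) ℝ) - Shatᵀ * Shat)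
        = 2 * Real.sqrt 2 * r ^ 2 / (3 * r ^ 2 + 2 * r + 1)
      ∧ StrictAntiOn
          (fun t : ℝ => 1 - 2 * Real.sqrt 2 * t ^ 2 / (3 * t ^ 2 + 2 * t + 1))
          (Set.Ioi 0) :=
  four_node_orthogonality_general r L hL S hS Shat hShat
end
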